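/- Fix real constants a,b,c. Let T = (q1(2q1+q2)p1²)/(q1−q2) + (q2(q1+2q2)p2²)/(q2−q1), V = a(4q1⁴+14q1³q2+19q1²q2²+14q1q2³+4q2⁴)/(q1+q2)² + b(q1+q2) + c(1/q1+1/q2), K1 = q1²p1−q2²p2, K2 = q1q2(p1−p2)²/(q1−q2)³, U1 = 2a(q1²+q1q2+q2²)(q1+q2)(q1−q2)² + b(q1−q2)²(q1+q2)²/2, and U2 = 2aq1q2/((q1+q2)(q1−q2)) − c/(q1q2(q1−q2)). Set H1 = T+V and H2 = (K1²+U1)(K2+U2)². Then {H1,H2} = 0 identically on the open set where q1, q2, q1−q2, q1+q2 are all nonzero. -/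

import Mathlib

/-- Canonical Poisson bracket of two functions on phase space (q1,q2,p1,p2). -/
noncomputable def pb (f g : ℝ → ℝ → ℝ → ℝ → ℝ) (q1 q2 p1 p2 : ℝ) : ℝ :=
  (deriv (fun x => f x q2 p1 p2) q1) * (deriv (fun x => g q1 q2 x p2) p1)
  - (deriv (fun x => f q1 q2 x p2) p1) * (deriv (fun x => g x q2 p1 p2) q1)
  + (deriv (fun x => f q1 x p1 p2) q2) * (deriv (fun x => g q1 q2 p1 x) p2)
  - (deriv (fun x => f q1 q2 p1 x) p2) * (deriv (fun x => g q1 x p1 p2) q2)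

noncomputable def H1 (a b c q1 q2 p1 p2 : ℝ) : ℝ :=
  q1 * (2*q1 + q2) * p1^2 / (q1 - q2) + q2 * (q1 + 2*q2) * p2^2 / (q2 - q1)
  + a * (4*q1^4 + 14*q1^3*q2 + 19*q1^2*q2^2 + 14*q1*q2^3 + 4*q2^4) / (q1 + q2)^2
  + b * (q1 + q2) + c * (1/q1 + 1/q2)

noncomputable def H2 (a b c q1 q2 p1 p2 : ℝ) : ℝ :=
  ((q1^2*p1 - q2^2*p2)^2
    + (2*a*(q1^2 + q1*q2 + q2^2)*(q1 + q2)*(q1 - q2)^2 + b*(q1 - q2)^2*(q1 + q2)^2/2))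
  * (q1*q2*(p1 - p2)^2/(q1 - q2)^3
    + (2*a*q1*q2/((q1 + q2)*(q1 - q2)) - c/(q1*q2*(q1 - q2))))^2

/-- First factor of H2. -/
noncomputable def FF (a b c q1 q2 p1 p2 : ℝ) : ℝ :=
  (q1^2*p1 - q2^2*p2)^2
    + (2*a*(q1^2 + q1*q2 + q2^2)*(q1 + q2)*(q1 - q2)^2 + b*(q1 - q2)^2*(q1 + q2)^2/2)

/-- Second factor of H2 (before squaring). -/
noncomputable def GG (a b c q1 q2 p1 p2 : ℝ) : ℝ :=
  q1*q2*(p1 - p2)^2/(q1 - q2)^3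
    + (2*a*q1*q2/((q1 + q2)*(q1 - q2)) - c/(q1*q2*(q1 - q2)))

lemma deriv_etaMul (c x : ℝ) : deriv (HMul.hMul c) x = c := by
  simpa using ((hasDerivAt_id x).const_mul c).deriv

lemma deriv_etaSub (c x : ℝ) : deriv (HSub.hSub c) x = -1 := by
  simpa using ((hasDerivAt_id x).const_sub c).deriv

lemma deriv_etaAdd (c x : ℝ) : deriv (HAdd.hAdd c) x = 1 := by
  simpa using ((hasDerivAt_id x).const_add c).deriv

lemma deriv_etaDiv (x : ℝ) : deriv (HDiv.hDiv (1:ℝ)) x = -(x^2)⁻¹ := by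
  have h : (HDiv.hDiv (1:ℝ)) = fun y : ℝ => y⁻¹ := by funext y; simp
  rw [h, deriv_inv]

set_option maxHeartbeats 16000000 in
lemma pb_H1_FF (a b c q1 q2 p1 p2 : ℝ) (h1 : q1 ≠ 0) (h2 : q2 ≠ 0)
    (hA : q1 - q2 ≠ 0) (h4 : q1 + q2 ≠ 0) :
    pb (H1 a b c) (FF a b c) q1 q2 p1 p2
      = -2 * FF a b c q1 q2 p1 p2 * (6*(q1^2*p1 + q2^2*p2)/(q1 - q2)^2) := by
  have hB : q2 - q1 ≠ 0 := fun h => hA (by linarith [sub_eq_zero.mp h])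
  have hC : (q1 + q2)^2 ≠ 0 := pow_ne_zero _ h4
  have h20 : (2:ℝ) ≠ 0 := two_ne_zero
  unfold pb H1 FF
  simp (disch := first | assumption | fun_prop (disch := assumption)) only
    [deriv_fun_add, deriv_fun_sub, deriv_fun_div, deriv_fun_mul, deriv_fun_pow, deriv_pow_field, deriv_const,
     deriv_id'', differentiableAt_fun_id, differentiableAt_const,
     deriv_etaMul, deriv_etaSub, deriv_etaAdd, deriv_etaDiv]
  field_simp
  ring

set_option maxHeartbeats 16000000 in
lemma pb_H1_GG (a b c q1 q2 p1 p2 : ℝ) (h1 : q1 ≠ 0) (h2 : q2 ≠ 0)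
    (hA : q1 - q2 ≠ 0) (h4 : q1 + q2 ≠ 0) :
    pb (H1 a b c) (GG a b c) q1 q2 p1 p2
      = GG a b c q1 q2 p1 p2 * (6*(q1^2*p1 + q2^2*p2)/(q1 - q2)^2) := by
  have hB : q2 - q1 ≠ 0 := fun h => hA (by linarith [sub_eq_zero.mp h])
  have hC : (q1 + q2)^2 ≠ 0 := pow_ne_zero _ h4
  have hD : (q1 - q2)^3 ≠ 0 := pow_ne_zero _ hA
  have hE : (q1 + q2)*(q1 - q2) ≠ 0 := mul_ne_zero h4 hA
  have hF : q1*q2*(q1 - q2) ≠ 0 := mul_ne_zero (mul_ne_zero h1 h2) hA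
  have h20 : (2:ℝ) ≠ 0 := two_ne_zero
  unfold pb H1 GG
  simp (disch := first | assumption | fun_prop (disch := assumption)) only
    [deriv_fun_add, deriv_fun_sub, deriv_fun_div, deriv_fun_mul, deriv_fun_pow, deriv_pow_field, deriv_const,
     deriv_id'', differentiableAt_fun_id, differentiableAt_const,
     deriv_etaMul, deriv_etaSub, deriv_etaAdd, deriv_etaDiv]
  field_simp
  ring

set_option maxHeartbeats 4000000 in
theorem stmt3 (a b c q1 q2 p1 p2 : ℝ) (h1 : q1 ≠ 0) (h2 : q2 ≠ 0)
    (h3 : q1 ≠ q2) (h4 : q1 + q2 ≠ 0) :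
    pb (H1 a b c) (H2 a b c) q1 q2 p1 p2 = 0 := by
  have hA : q1 - q2 ≠ 0 := sub_ne_zero.mpr h3
  have hB : q2 - q1 ≠ 0 := sub_ne_zero.mpr (Ne.symm h3)
  have hC : (q1 + q2)^2 ≠ 0 := pow_ne_zero _ h4
  have hD : (q1 - q2)^3 ≠ 0 := pow_ne_zero _ hA
  have hE : (q1 + q2)*(q1 - q2) ≠ 0 := mul_ne_zero h4 hA
  have hF : q1*q2*(q1 - q2) ≠ 0 := mul_ne_zero (mul_ne_zero h1 h2) hA
  have h20 : (2:ℝ) ≠ 0 := two_ne_zero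
  have hH2 : H2 a b c = fun x y u v => FF a b c x y u v * GG a b c x y u v ^ 2 := rfl
  -- differentiability of slices of FF and GG
  have dF1 : DifferentiableAt ℝ (fun x => FF a b c x q2 p1 p2) q1 := by
    unfold FF; fun_prop
  have dF2 : DifferentiableAt ℝ (fun x => FF a b c q1 x p1 p2) q2 := by
    unfold FF; fun_prop
  have dF3 : DifferentiableAt ℝ (fun x => FF a b c q1 q2 x p2) p1 := by
    unfold FF; fun_prop
  have dF4 : DifferentiableAt ℝ (fun x => FF a b c q1 q2 p1 x) p2 := by
    unfold FF; fun_prop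
  have dG1 : DifferentiableAt ℝ (fun x => GG a b c x q2 p1 p2) q1 := by
    unfold GG; fun_prop (disch := assumption)
  have dG2 : DifferentiableAt ℝ (fun x => GG a b c q1 x p1 p2) q2 := by
    unfold GG; fun_prop (disch := assumption)
  have dG3 : DifferentiableAt ℝ (fun x => GG a b c q1 q2 x p2) p1 := by
    unfold GG; fun_prop (disch := assumption)
  have dG4 : DifferentiableAt ℝ (fun x => GG a b c q1 q2 p1 x) p2 := by
    unfold GG; fun_prop (disch := assumption)
  have key1 := pb_H1_FF a b c q1 q2 p1 p2 h1 h2 hA h4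
  have key2 := pb_H1_GG a b c q1 q2 p1 p2 h1 h2 hA h4
  unfold pb at key1 key2 ⊢
  rw [hH2]
  beta_reduce
  rw [deriv_fun_mul dF1 (dG1.fun_pow 2), deriv_fun_mul dF2 (dG2.fun_pow 2),
      deriv_fun_mul dF3 (dG3.fun_pow 2), deriv_fun_mul dF4 (dG4.fun_pow 2),
      deriv_fun_pow dG1 2, deriv_fun_pow dG2 2, deriv_fun_pow dG3 2, deriv_fun_pow dG4 2]
  set A1 := deriv (fun x => H1 a b c x q2 p1 p2) q1
  set A2 := deriv (fun x => H1 a b c q1 x p1 p2) q2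
  set A3 := deriv (fun x => H1 a b c q1 q2 x p2) p1
  set A4 := deriv (fun x => H1 a b c q1 q2 p1 x) p2
  set B1 := deriv (fun x => FF a b c x q2 p1 p2) q1
  set B2 := deriv (fun x => FF a b c q1 x p1 p2) q2
  set B3 := deriv (fun x => FF a b c q1 q2 x p2) p1
  set B4 := deriv (fun x => FF a b c q1 q2 p1 x) p2
  set C1 := deriv (fun x => GG a b c x q2 p1 p2) q1
  set C2 := deriv (fun x => GG a b c q1 x p1 p2) q2
  set C3 := deriv (fun x => GG a b c q1 q2 x p2) p1
  set C4 := deriv (fun x => GG a b c q1 q2 p1 x) p2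
  set Fv := FF a b c q1 q2 p1 p2
  set Gv := GG a b c q1 q2 p1 p2
  norm_num only
  linear_combination Gv^2 * key1 + 2*Fv*Gv * key2
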